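/- Let ξ = ξ₁ + ξ₂ + ξ₃ + ξ₄ in ℝ, and suppose |ξ₁² + ξ₂² + ξ₃² − ξ₄² − ξ²| ≥ c₀ ⟨ξ₂⟩⟨ξ₃⟩ fails, i.e. 2|ξ₂ξ₃ − ξ(ξ₂+ξ₃)| < c₀⟨ξ₂⟩⟨ξ₃⟩ for small enough c₀, where ξ₁ is replaced using ξ₁ = ξ − ξ₂ − ξ₃ − ξ₄. Then, for appropriate absolute constants c: either ⟨ξ₂⟩ ≤ c⟨ξ⟩ or ⟨ξ₃⟩ ≤ c⟨ξ⟩; and moreover either ⟨ξ₂⟩, ⟨ξ₃⟩ ≤ c⟨ξ₂ ± ξ₃⟩ (both signs) or ⟨ξ₂⟩, ⟨ξ₃⟩ ≤ c⟨ξ ± ξ_{2,3}⟩. -/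
import Mathlib


/-- Japanese bracket. -/
noncomputable def jb (x : ℝ) : ℝ := Real.sqrt (1 + x ^ 2)

lemma one_le_jb (x : ℝ) : 1 ≤ jb x := by
  have := Real.sqrt_le_sqrt (show (1:ℝ) ≤ 1 + x ^ 2 by nlinarith [sq_nonneg x])
  simpa [jb] using this

lemma jb_le_mul {c u v : ℝ} (hc : 0 ≤ c) (h : 1 + u ^ 2 ≤ c ^ 2 * (1 + v ^ 2)) :
    jb u ≤ c * jb v := by
  rw [jb, jb]
  calc Real.sqrt (1 + u ^ 2) ≤ Real.sqrt (c ^ 2 * (1 + v ^ 2)) := Real.sqrt_le_sqrt h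
    _ = c * Real.sqrt (1 + v ^ 2) := by
        rw [Real.sqrt_mul (sq_nonneg c), Real.sqrt_sq hc]

lemma jb_le_one_add_abs (x : ℝ) : jb x ≤ 1 + |x| := by
  have h : (1 + x ^ 2) ≤ (1 + |x|) ^ 2 := by nlinarith [abs_nonneg x, sq_abs x]
  calc jb x ≤ Real.sqrt ((1 + |x|) ^ 2) := Real.sqrt_le_sqrt h
    _ = 1 + |x| := Real.sqrt_sq (by positivity)

lemma jb_sub_comm (x y : ℝ) : jb (x - y) = jb (y - x) := by
  rw [jb, jb]; ring_nf

/-- squaring a lower bound on an absolute value -/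
lemma absq {u m : ℝ} (hm : 0 ≤ m) (h : m ≤ |u|) : m ^ 2 ≤ u ^ 2 := by
  have := pow_le_pow_left₀ hm h 2
  rwa [sq_abs] at this

lemma sqle {u v : ℝ} (h : |u| ≤ |v|) : u ^ 2 ≤ v ^ 2 := by
  have := pow_le_pow_left₀ (abs_nonneg u) h 2
  simpa [sq_abs] using this

/-- If `|ξ|` is very small compared to `|a|`, then `|a|` must be tiny. -/
lemma aux1 {A B X S : ℝ} (hX : 0 ≤ X) (hAB : A ≤ B) (hB : 4 < B)
    (hS : S ≤ A + B) (hS0 : 0 ≤ S) (hx : 4 * X < A)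
    (h : A * B - X * S < (1/100) * ((1 + A) * (1 + B))) : A ≤ 1 := by
  by_contra h1
  push_neg at h1
  have hB0 : (0:ℝ) ≤ B := by linarith
  have hA0 : (0:ℝ) ≤ A := by linarith
  nlinarith [mul_le_mul_of_nonneg_left hS hX,
    mul_le_mul_of_nonneg_right hx.le (by linarith : (0:ℝ) ≤ A + B),
    mul_le_mul_of_nonneg_left hAB hA0,
    mul_le_mul_of_nonneg_right h1.le hB0]

/-- Upper bound on `|ξ|` in the `a ≈ b` case. -/
lemma aux2 {A B X S : ℝ} (hX : 0 ≤ X) (hA0 : 0 ≤ A) (hAB : A ≤ B) (hB : 4 < B)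
    (hS7 : 7 * B / 4 ≤ S)
    (hh : X * S - A * B < (1/100) * ((1 + A) * (1 + B))) : X ≤ 3 * B / 5 := by
  have hB0 : (0:ℝ) ≤ B := by linarith
  nlinarith [mul_le_mul_of_nonneg_left hS7 hX,
    mul_le_mul_of_nonneg_right hAB hB0, sq_nonneg (B - 4)]

/-- Lower bound on `|ξ|` in the `a ≈ -b` case. -/
lemma aux3 {A B X S : ℝ} (hX : 0 ≤ X) (hA0 : 0 ≤ A) (hAB : A ≤ B) (hB : 4 < B)
    (hA34 : 3 * B / 4 ≤ A) (hSs : S < B / 4) (hS0 : 0 ≤ S)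
    (hl : A * B - X * S < (1/100) * ((1 + A) * (1 + B))) : 2 * B ≤ X := by
  have hB0 : (0:ℝ) ≤ B := by linarith
  nlinarith [mul_le_mul_of_nonneg_left hSs.le hX,
    mul_le_mul_of_nonneg_right hA34 hB0,
    mul_le_mul_of_nonneg_right hAB hB0, sq_nonneg (B - 4)]

lemma key (ξ a b : ℝ) (hab : |a| ≤ |b|)
    (H : |a * b - ξ * (a + b)| < (1/100) * ((1 + |a|) * (1 + |b|))) :
    jb a ≤ 10 * jb ξ ∧
    ((jb a ≤ 10 * jb (a + b) ∧ jb a ≤ 10 * jb (a - b) ∧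
      jb b ≤ 10 * jb (a + b) ∧ jb b ≤ 10 * jb (a - b)) ∨
     (jb a ≤ 10 * jb (ξ + a) ∧ jb a ≤ 10 * jb (ξ - a) ∧
      jb b ≤ 10 * jb (ξ + b) ∧ jb b ≤ 10 * jb (ξ - b))) := by
  have hA0 : (0:ℝ) ≤ |a| := abs_nonneg a
  have hB0 : (0:ℝ) ≤ |b| := abs_nonneg b
  have hX0 : (0:ℝ) ≤ |ξ| := abs_nonneg ξ
  have hS0 : (0:ℝ) ≤ |a + b| := abs_nonneg _
  have hD0 : (0:ℝ) ≤ |a - b| := abs_nonneg _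
  have hsqab : a ^ 2 ≤ b ^ 2 := sqle hab
  -- triangle facts
  have hS : |a + b| ≤ |a| + |b| := abs_add_le a b
  have hBD : |b| ≤ |a| + |a - b| := by
    have := abs_add_le a (-(a - b)); simp only [abs_neg] at this
    calc |b| = |a + -(a - b)| := by ring_nf
      _ ≤ |a| + |a - b| := this
  have hBS : |b| ≤ |a| + |a + b| := by
    have := abs_add_le (a + b) (-a); simp only [abs_neg] at this
    calc |b| = |(a + b) + -a| := by ring_nf
      _ ≤ |a + b| + |a| := this
      _ = |a| + |a + b| := by ring
  have hSD : 2 * |b| ≤ |a + b| + |a - b| := by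
    have := abs_add_le (a + b) (-(a - b)); simp only [abs_neg] at this
    calc 2 * |b| = |(2:ℝ) * b| := by rw [abs_mul]; norm_num
      _ = |(a + b) + -(a - b)| := by ring_nf
      _ ≤ |a + b| + |a - b| := this
  -- bounds from H
  have hlow : |a| * |b| - |ξ| * |a + b| < (1/100) * ((1 + |a|) * (1 + |b|)) := by
    have h1 : |a * b| - |ξ * (a + b)| ≤ |a * b - ξ * (a + b)| :=
      abs_sub_abs_le_abs_sub _ _
    rw [abs_mul, abs_mul] at h1
    linarith
  have hhigh : |ξ| * |a + b| - |a| * |b| < (1/100) * ((1 + |a|) * (1 + |b|)) := by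
    have h1 : |ξ * (a + b)| - |a * b| ≤ |ξ * (a + b) - a * b| :=
      abs_sub_abs_le_abs_sub _ _
    rw [abs_mul, abs_mul, abs_sub_comm] at h1
    linarith
  -- triangle facts relating ξ and a, b
  have hXa1 : |a| - |ξ| ≤ |ξ + a| := by
    have h := abs_sub_abs_le_abs_sub a (-ξ)
    rw [abs_neg, sub_neg_eq_add] at h
    rwa [add_comm ξ a]
  have hXa2 : |a| - |ξ| ≤ |ξ - a| := by
    have h := abs_sub_abs_le_abs_sub a ξ
    rwa [abs_sub_comm a ξ] at h
  have hXa1' : |ξ| - |a| ≤ |ξ + a| := by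
    have h := abs_sub_abs_le_abs_sub ξ (-a)
    rwa [abs_neg, sub_neg_eq_add] at h
  have hXa2' : |ξ| - |a| ≤ |ξ - a| := abs_sub_abs_le_abs_sub ξ a
  have hXb1 : |b| - |ξ| ≤ |ξ + b| := by
    have h := abs_sub_abs_le_abs_sub b (-ξ)
    rw [abs_neg, sub_neg_eq_add] at h
    rwa [add_comm ξ b]
  have hXb2 : |b| - |ξ| ≤ |ξ - b| := by
    have h := abs_sub_abs_le_abs_sub b ξ
    rwa [abs_sub_comm b ξ] at h
  have hXb1' : |ξ| - |b| ≤ |ξ + b| := by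
    have h := abs_sub_abs_le_abs_sub ξ (-b)
    rwa [abs_neg, sub_neg_eq_add] at h
  have hXb2' : |ξ| - |b| ≤ |ξ - b| := abs_sub_abs_le_abs_sub ξ b
  rcases le_or_gt |b| 4 with hb4 | hb4
  · -- everything is bounded
    have hb16 : b ^ 2 ≤ 16 := by
      have := pow_le_pow_left₀ hB0 hb4 2
      rw [sq_abs] at this; linarith
    have ha16 : a ^ 2 ≤ 16 := le_trans hsqab hb16
    refine ⟨?_, Or.inl ⟨?_, ?_, ?_, ?_⟩⟩ <;> refine jb_le_mul (by norm_num) ?_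
    · linarith [sq_nonneg ξ]
    · linarith [sq_nonneg (a + b)]
    · linarith [sq_nonneg (a - b)]
    · linarith [sq_nonneg (a + b)]
    · linarith [sq_nonneg (a - b)]
  · -- |b| > 4
    constructor
    · -- jb a ≤ 10 * jb ξ
      rcases le_or_gt |a| (4 * |ξ|) with hx | hx
      · refine jb_le_mul (by norm_num) ?_
        have h16 : a ^ 2 ≤ 16 * ξ ^ 2 := by
          have := pow_le_pow_left₀ hA0 hx 2
          rw [sq_abs, mul_pow, sq_abs] at this
          linarith
        linarith [sq_nonneg ξ]
      · have ha1 : |a| ≤ 1 := aux1 hX0 hab hb4 hS hS0 hx hlow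
        refine jb_le_mul (by norm_num) ?_
        have h1 : a ^ 2 ≤ 1 := by
          have := pow_le_pow_left₀ hA0 ha1 2
          rw [sq_abs] at this; linarith
        linarith [sq_nonneg ξ]
    · rcases lt_or_ge |a - b| (|b| / 4) with hDs | hDl
      · -- a ≈ b : use the ξ ± · brackets ; |ξ| ≤ (3/5)|b|
        right
        have hAge : 3 * |b| / 4 ≤ |a| := by linarith
        have hSge : 7 * |b| / 4 ≤ |a + b| := by linarith
        have hXub : |ξ| ≤ 3 * |b| / 5 := aux2 hX0 hA0 hab hb4 hSge hhigh
        have hq1 : (3 * |b| / 20) ^ 2 ≤ (ξ + a) ^ 2 :=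
          absq (by positivity) (by linarith)
        have hq2 : (3 * |b| / 20) ^ 2 ≤ (ξ - a) ^ 2 :=
          absq (by positivity) (by linarith)
        have hq3 : (2 * |b| / 5) ^ 2 ≤ (ξ + b) ^ 2 :=
          absq (by positivity) (by linarith)
        have hq4 : (2 * |b| / 5) ^ 2 ≤ (ξ - b) ^ 2 :=
          absq (by positivity) (by linarith)
        have hbb : |b| ^ 2 = b ^ 2 := sq_abs b
        refine ⟨?_, ?_, ?_, ?_⟩ <;> refine jb_le_mul (by norm_num) ?_ <;>
          linarith [sq_nonneg b]
      · rcases lt_or_ge |a + b| (|b| / 4) with hSs | hSl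
        · -- a ≈ -b : |ξ| ≥ 2|b|
          right
          have hAge : 3 * |b| / 4 ≤ |a| := by linarith
          have hXlb : 2 * |b| ≤ |ξ| := aux3 hX0 hA0 hab hb4 hAge hSs hS0 hlow
          have hq1 : |b| ^ 2 ≤ (ξ + a) ^ 2 := absq hB0 (by linarith)
          have hq2 : |b| ^ 2 ≤ (ξ - a) ^ 2 := absq hB0 (by linarith)
          have hq3 : |b| ^ 2 ≤ (ξ + b) ^ 2 := absq hB0 (by linarith)
          have hq4 : |b| ^ 2 ≤ (ξ - b) ^ 2 := absq hB0 (by linarith)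
          have hbb : |b| ^ 2 = b ^ 2 := sq_abs b
          refine ⟨?_, ?_, ?_, ?_⟩ <;> refine jb_le_mul (by norm_num) ?_ <;>
            linarith [sq_nonneg b]
        · -- both |a ± b| ≥ |b|/4
          left
          have hq1 : (|b| / 4) ^ 2 ≤ (a + b) ^ 2 := absq (by positivity) hSl
          have hq2 : (|b| / 4) ^ 2 ≤ (a - b) ^ 2 := absq (by positivity) hDl
          have hbb : |b| ^ 2 = b ^ 2 := sq_abs b
          refine ⟨?_, ?_, ?_, ?_⟩ <;> refine jb_le_mul (by norm_num) ?_ <;>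
            linarith [sq_nonneg b]

/-- Frequency analysis of the exceptional region `A^c` for the nonlinearity `uū²`:
if the controlled quantity `2|ξ₂ξ₃ − ξ(ξ₂+ξ₃)|` is smaller than `c₀⟨ξ₂⟩⟨ξ₃⟩` for small
enough `c₀`, then either `⟨ξ₂⟩ ≤ c⟨ξ⟩` or `⟨ξ₃⟩ ≤ c⟨ξ⟩`; and moreover either
`⟨ξ₂⟩, ⟨ξ₃⟩ ≤ c⟨ξ₂ ± ξ₃⟩` (both signs) or `⟨ξ₂⟩, ⟨ξ₃⟩ ≤ c⟨ξ ± ξ_{2,3}⟩`. -/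
theorem exceptional_region_u_ubar_sq :
    ∃ c₀ > (0 : ℝ), ∃ c > (0 : ℝ), ∀ ξ ξ₂ ξ₃ : ℝ,
      2 * |ξ₂ * ξ₃ - ξ * (ξ₂ + ξ₃)| < c₀ * (jb ξ₂ * jb ξ₃) →
      (jb ξ₂ ≤ c * jb ξ ∨ jb ξ₃ ≤ c * jb ξ) ∧
      ((jb ξ₂ ≤ c * jb (ξ₂ + ξ₃) ∧ jb ξ₂ ≤ c * jb (ξ₂ - ξ₃) ∧
        jb ξ₃ ≤ c * jb (ξ₂ + ξ₃) ∧ jb ξ₃ ≤ c * jb (ξ₂ - ξ₃)) ∨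
       (jb ξ₂ ≤ c * jb (ξ + ξ₂) ∧ jb ξ₂ ≤ c * jb (ξ - ξ₂) ∧
        jb ξ₃ ≤ c * jb (ξ + ξ₃) ∧ jb ξ₃ ≤ c * jb (ξ - ξ₃))) := by
  refine ⟨1/50, by norm_num, 10, by norm_num, ?_⟩
  intro ξ ξ₂ ξ₃ h
  have hj2 := jb_le_one_add_abs ξ₂
  have hj3 := jb_le_one_add_abs ξ₃
  have hprod : jb ξ₂ * jb ξ₃ ≤ (1 + |ξ₂|) * (1 + |ξ₃|) :=
    mul_le_mul hj2 hj3 (le_trans zero_le_one (one_le_jb _)) (by positivity)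
  have H' : |ξ₂ * ξ₃ - ξ * (ξ₂ + ξ₃)| < (1/100) * ((1 + |ξ₂|) * (1 + |ξ₃|)) := by
    linarith
  rcases le_total |ξ₂| |ξ₃| with hc | hc
  · obtain ⟨K1, K2⟩ := key ξ ξ₂ ξ₃ hc H'
    exact ⟨Or.inl K1, K2⟩
  · have H'' : |ξ₃ * ξ₂ - ξ * (ξ₃ + ξ₂)| < (1/100) * ((1 + |ξ₃|) * (1 + |ξ₂|)) := by
      rw [show ξ₃ * ξ₂ - ξ * (ξ₃ + ξ₂) = ξ₂ * ξ₃ - ξ * (ξ₂ + ξ₃) by ring,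
        mul_comm (1 + |ξ₃|) (1 + |ξ₂|)]
      exact H'
    obtain ⟨K1, K2⟩ := key ξ ξ₃ ξ₂ hc H''
    refine ⟨Or.inr K1, ?_⟩
    rcases K2 with ⟨k1, k2, k3, k4⟩ | ⟨k1, k2, k3, k4⟩
    · left
      rw [add_comm ξ₃ ξ₂] at k1 k3
      rw [jb_sub_comm ξ₃ ξ₂] at k2 k4
      exact ⟨k3, k4, k1, k2⟩
    · exact Or.inr ⟨k3, k4, k1, k2⟩
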